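/- For each natural number n, define V_n : ℝ \ {0} → ℝ by V_n(q) = q^(4n) + V(q)·P_n(q), where V(q) = −q⁹ + q⁷ − q⁵ + q³ + q + q⁻¹ + q⁻³ − q⁻⁵ + q⁻⁷ − q⁻⁹ and P_n(q) = ∑_{k=1}^{n} (q^(4k−3) − q^(4k−1)), and define the mirror function W_n : ℝ \ {0} → ℝ by W_n(q) = V_n(q⁻¹). Then the third (real) derivatives at q = 1 satisfy W_n‴(1) = −V_n‴(1); in particular W_n‴(1) = −576n. -/

import Mathlib

/-!
The pretzel factor is invariant under `q ↦ q⁻¹`, and `(1 + q²) Pₙ(q) = q - q^(4n+1)` gives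
`Pₙ(q⁻¹) = -q^(-4n) Pₙ(q)`. Hence `Wₙ(q) = 1 + q^(-4n) (1 - Vₙ(q))` for `q ≠ 0`. Since
`Vₙ(1) = 1` and `Vₙ'(1) = Vₙ''(1) = 0`, Leibniz's rule at `q = 1` only keeps the term
`-Vₙ'''(1)`. The value `Vₙ'''(1) = 576 n` comes from Leibniz's rule for `V · Pₙ`, using the
derivatives of the monomials `q^m` at `1` and power sums over `k`.
-/

/-- The Jones polynomial of the pretzel link `P(3,−2,2,−3)`. -/
noncomputable def pretzelV : ℝ → ℝ := fun q =>
  -q ^ 9 + q ^ 7 - q ^ 5 + q ^ 3 + q + q⁻¹ + (q⁻¹) ^ 3 - (q⁻¹) ^ 5 + (q⁻¹) ^ 7 - (q⁻¹) ^ 9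

/-- `Pₙ(q) = ∑_{k=1}^{n} (q^(4k−3) − q^(4k−1))`. -/
noncomputable def Pfun (n : ℕ) : ℝ → ℝ := fun q =>
  ∑ k ∈ Finset.Icc 1 n, (q ^ (4 * k - 3) - q ^ (4 * k - 1))

/-- The Jones polynomial of `KT_{2,n}`: `Vₙ(q) = q^(4n) + V(q)·Pₙ(q)`. -/
noncomputable def Vfun (n : ℕ) : ℝ → ℝ := fun q =>
  q ^ (4 * n) + pretzelV q * Pfun n q

/-- The Jones polynomial of the mirror `KT_{2,−n}`: `Wₙ(q) = Vₙ(q⁻¹)`. -/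
noncomputable def Wfun (n : ℕ) : ℝ → ℝ := fun q => Vfun n q⁻¹

open Finset Filter Topology

section IteratedDeriv

variable {𝕜 : Type*} [NontriviallyNormedField 𝕜]

theorem iteratedDeriv_pow_at_one (m k : ℕ) :
    iteratedDeriv k (fun q : 𝕜 => q ^ m) 1 = ∏ i ∈ range k, ((m : 𝕜) - i) := by
  rw [iteratedDeriv_eq_iterate, iter_deriv_pow, one_pow, mul_one]

theorem iteratedDeriv_zpow_at_one (m : ℤ) (k : ℕ) :
    iteratedDeriv k (fun q : 𝕜 => q ^ m) 1 = ∏ i ∈ range k, ((m : 𝕜) - i) := by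
  rw [iteratedDeriv_eq_iterate, iter_deriv_zpow, one_zpow, mul_one]

theorem iteratedDeriv_sum_zpow_at_one [CompleteSpace 𝕜] {ι : Type*} (s : Finset ι) (c : ι → 𝕜)
    (e : ι → ℤ) (k : ℕ) :
    iteratedDeriv k (fun q : 𝕜 => ∑ i ∈ s, c i * q ^ e i) 1
      = ∑ i ∈ s, c i * ∏ j ∈ range k, ((e i : 𝕜) - j) := by
  rw [iteratedDeriv_fun_sum fun i _ =>
    contDiffAt_const.mul (analyticAt_id.zpow one_ne_zero).contDiffAt]
  simp only [iteratedDeriv_const_mul_field, iteratedDeriv_zpow_at_one]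

theorem iteratedDeriv_mul_of_iteratedDeriv_eq_zero {f g : 𝕜 → 𝕜} {x : 𝕜} {k : ℕ}
    (hf : ContDiffAt 𝕜 k f x) (hg : ContDiffAt 𝕜 k g x)
    (hg0 : ∀ j < k, iteratedDeriv j g x = 0) :
    iteratedDeriv k (fun y => f y * g y) x = f x * iteratedDeriv k g x := by
  rw [iteratedDeriv_fun_mul hf hg, sum_range_succ', sum_eq_zero fun i hi => ?_]
  · simp
  · rw [hg0 _ (by simp at hi; omega), mul_zero]

end IteratedDeriv

theorem pretzelV_inv (q : ℝ) : pretzelV q⁻¹ = pretzelV q := by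
  simp only [pretzelV, inv_inv]
  ring

theorem pretzelV_eq_sum_zpow :
    pretzelV = fun q => ∑ i : Fin 10,
      (![-1, 1, -1, 1, 1, 1, 1, -1, 1, -1] : Fin 10 → ℝ) i *
        q ^ (![9, 7, 5, 3, 1, -1, -3, -5, -7, -9] : Fin 10 → ℤ) i := by
  funext q
  simp only [pretzelV, Fin.sum_univ_succ, Fin.sum_univ_zero, Matrix.cons_val_zero,
    Matrix.cons_val_succ, zpow_neg, zpow_ofNat, inv_pow]
  ring

theorem contDiffAt_pretzelV {k : WithTop ℕ∞} : ContDiffAt ℝ k pretzelV 1 := by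
  unfold pretzelV
  fun_prop (disch := norm_num)

theorem pretzelV_one : pretzelV 1 = 2 := by
  norm_num [pretzelV]

theorem iteratedDeriv_one_pretzelV_one : iteratedDeriv 1 pretzelV 1 = 0 := by
  rw [pretzelV_eq_sum_zpow, iteratedDeriv_sum_zpow_at_one]
  simp [Fin.sum_univ_succ]

theorem iteratedDeriv_two_pretzelV_one : iteratedDeriv 2 pretzelV 1 = -94 := by
  rw [pretzelV_eq_sum_zpow, iteratedDeriv_sum_zpow_at_one]
  norm_num [Fin.sum_univ_succ, prod_range_succ]

theorem Pfun_eq_sum_range (n : ℕ) (q : ℝ) :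
    Pfun n q = ∑ k ∈ range n, (q ^ (4 * k + 1) - q ^ (4 * k + 3)) := by
  rw [Pfun, ← Ico_add_one_right_eq_Icc, sum_Ico_eq_sum_range]
  refine sum_congr rfl fun k _ => ?_
  congr 2 <;> omega

theorem contDiff_Pfun (n : ℕ) {k : WithTop ℕ∞} : ContDiff ℝ k (Pfun n) := by
  unfold Pfun
  fun_prop

theorem one_add_sq_mul_Pfun (n : ℕ) (q : ℝ) : (1 + q ^ 2) * Pfun n q = q - q ^ (4 * n + 1) := by
  induction n with
  | zero => simp [Pfun]
  | succ n ih =>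
    rw [Pfun_eq_sum_range, sum_range_succ, ← Pfun_eq_sum_range, mul_add, ih]
    ring

theorem Pfun_inv (n : ℕ) {q : ℝ} (hq : q ≠ 0) : Pfun n q⁻¹ = -q⁻¹ ^ (4 * n) * Pfun n q := by
  have hP (x : ℝ) : Pfun n x = (x - x ^ (4 * n + 1)) / (1 + x ^ 2) :=
    eq_div_of_mul_eq (by positivity) ((mul_comm _ _).trans (one_add_sq_mul_Pfun n x))
  rw [hP, hP]
  simp only [inv_pow]
  field_simp
  ring

theorem Pfun_one (n : ℕ) : Pfun n 1 = 0 := by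
  simp [Pfun]

theorem iteratedDeriv_Pfun_at_one (n j : ℕ) :
    iteratedDeriv j (Pfun n) 1 = ∑ k ∈ range n,
      (∏ i ∈ range j, (((4 * k + 1 : ℕ) : ℝ) - i) -
        ∏ i ∈ range j, (((4 * k + 3 : ℕ) : ℝ) - i)) := by
  rw [funext (Pfun_eq_sum_range n), iteratedDeriv_fun_sum fun k _ => by fun_prop]
  refine sum_congr rfl fun k _ => ?_
  rw [iteratedDeriv_fun_sub (by fun_prop) (by fun_prop), iteratedDeriv_pow_at_one,
    iteratedDeriv_pow_at_one]

theorem iteratedDeriv_one_Pfun_one (n : ℕ) : iteratedDeriv 1 (Pfun n) 1 = -2 * n := by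
  rw [iteratedDeriv_Pfun_at_one]
  induction n with
  | zero => simp
  | succ n ih =>
    rw [sum_range_succ, ih]
    push_cast [prod_range_succ]
    ring

theorem iteratedDeriv_two_Pfun_one (n : ℕ) : iteratedDeriv 2 (Pfun n) 1 = 2 * n - 8 * n ^ 2 := by
  rw [iteratedDeriv_Pfun_at_one]
  induction n with
  | zero => simp
  | succ n ih =>
    rw [sum_range_succ, ih]
    push_cast [prod_range_succ]
    ring

theorem iteratedDeriv_three_Pfun_one (n : ℕ) :
    iteratedDeriv 3 (Pfun n) 1 = 2 * n + 24 * n ^ 2 - 32 * n ^ 3 := by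
  rw [iteratedDeriv_Pfun_at_one]
  induction n with
  | zero => simp
  | succ n ih =>
    rw [sum_range_succ, ih]
    push_cast [prod_range_succ]
    ring

theorem contDiffAt_Vfun (n : ℕ) {k : WithTop ℕ∞} : ContDiffAt ℝ k (Vfun n) 1 :=
  (contDiffAt_id.pow _).add (contDiffAt_pretzelV.mul (contDiff_Pfun n).contDiffAt)

theorem iteratedDeriv_Vfun_at_one (n j : ℕ) :
    iteratedDeriv j (Vfun n) 1 = ∏ i ∈ range j, (((4 * n : ℕ) : ℝ) - i) +
      ∑ i ∈ range (j + 1),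
        j.choose i * iteratedDeriv i pretzelV 1 * iteratedDeriv (j - i) (Pfun n) 1 := by
  rw [show Vfun n = (fun q => q ^ (4 * n)) + fun q => pretzelV q * Pfun n q from rfl,
    iteratedDeriv_add (by fun_prop) (contDiffAt_pretzelV.mul (contDiff_Pfun n).contDiffAt),
    iteratedDeriv_fun_mul contDiffAt_pretzelV (contDiff_Pfun n).contDiffAt,
    iteratedDeriv_pow_at_one]

theorem Vfun_one (n : ℕ) : Vfun n 1 = 1 := by
  simp [Vfun, Pfun_one]

theorem iteratedDeriv_one_Vfun_one (n : ℕ) : iteratedDeriv 1 (Vfun n) 1 = 0 := by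
  rw [iteratedDeriv_Vfun_at_one]
  simp only [sum_range_succ, prod_range_succ, sum_range_zero, prod_range_zero, Nat.reduceSub,
    Nat.reduceAdd, Nat.choose_self, Nat.choose_zero_right, iteratedDeriv_zero, pretzelV_one,
    iteratedDeriv_one_pretzelV_one, Pfun_one, iteratedDeriv_one_Pfun_one]
  push_cast
  ring

theorem iteratedDeriv_two_Vfun_one (n : ℕ) : iteratedDeriv 2 (Vfun n) 1 = 0 := by
  rw [iteratedDeriv_Vfun_at_one]
  simp only [sum_range_succ, prod_range_succ, sum_range_zero, prod_range_zero, Nat.reduceSub,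
    Nat.reduceAdd, Nat.choose_self, Nat.choose_zero_right, Nat.choose_one_right,
    iteratedDeriv_zero, pretzelV_one, iteratedDeriv_one_pretzelV_one,
    iteratedDeriv_two_pretzelV_one, Pfun_one, iteratedDeriv_one_Pfun_one,
    iteratedDeriv_two_Pfun_one]
  push_cast
  ring

theorem iteratedDeriv_three_Vfun_one (n : ℕ) : iteratedDeriv 3 (Vfun n) 1 = 576 * n := by
  rw [iteratedDeriv_Vfun_at_one]
  simp only [sum_range_succ, prod_range_succ, sum_range_zero, prod_range_zero, Nat.reduceSub,
    Nat.reduceAdd, Nat.reduceMul, Nat.reduceDiv, Nat.choose_self, Nat.choose_zero_right,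
    Nat.choose_one_right, Nat.choose_two_right, iteratedDeriv_zero, pretzelV_one,
    iteratedDeriv_one_pretzelV_one, iteratedDeriv_two_pretzelV_one, Pfun_one,
    iteratedDeriv_one_Pfun_one, iteratedDeriv_two_Pfun_one, iteratedDeriv_three_Pfun_one]
  push_cast
  ring

theorem Wfun_eq_of_ne_zero (n : ℕ) {q : ℝ} (hq : q ≠ 0) :
    Wfun n q = 1 + q⁻¹ ^ (4 * n) * (1 - Vfun n q) := by
  have h : q⁻¹ ^ (4 * n) * q ^ (4 * n) = 1 := by
    rw [inv_pow, inv_mul_cancel₀ (pow_ne_zero _ hq)]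
  simp only [Wfun, Vfun, pretzelV_inv, Pfun_inv n hq]
  linear_combination h

theorem iteratedDeriv_three_Wfun_one (n : ℕ) :
    iteratedDeriv 3 (Wfun n) 1 = -iteratedDeriv 3 (Vfun n) 1 := by
  have hW : Wfun n =ᶠ[𝓝 1] fun q => 1 + q⁻¹ ^ (4 * n) * (1 - Vfun n q) :=
    (eventually_ne_nhds one_ne_zero).mono fun q hq => Wfun_eq_of_ne_zero n hq
  have hvanish : ∀ j < 3, iteratedDeriv j (fun q => 1 - Vfun n q) 1 = 0 := by
    intro j hj
    interval_cases j
    · simp [Vfun_one]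
    · simp [iteratedDeriv_const_sub, iteratedDeriv_one_Vfun_one]
    · simp [iteratedDeriv_const_sub, iteratedDeriv_two_Vfun_one]
  have hu : ContDiffAt ℝ 3 (fun q : ℝ => q⁻¹ ^ (4 * n)) 1 := by fun_prop (disch := norm_num)
  rw [hW.iteratedDeriv_eq, iteratedDeriv_const_add three_pos]
  refine (iteratedDeriv_mul_of_iteratedDeriv_eq_zero hu
    (contDiffAt_const.sub (contDiffAt_Vfun n)) hvanish).trans ?_
  simp [iteratedDeriv_const_sub three_pos]

/-- `Wₙ‴(1) = −Vₙ‴(1)`; in particular `Wₙ‴(1) = −576n`. -/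
theorem Wfun_third_deriv_at_one (n : ℕ) :
    iteratedDeriv 3 (Wfun n) 1 = -iteratedDeriv 3 (Vfun n) 1 ∧
      iteratedDeriv 3 (Wfun n) 1 = -576 * n := by
  refine ⟨iteratedDeriv_three_Wfun_one n, ?_⟩
  rw [iteratedDeriv_three_Wfun_one, iteratedDeriv_three_Vfun_one, neg_mul]
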